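/- Let w be a weight on the unit circle with all Toeplitz determinants nonzero and let (φ_n, φ̄_n) be a BOPS for w. Assume r_n ≠ 0 for all n ≥ 0 and set ϕ_n := φ_n/κ_n (the monic polynomials). Then for every n ≥ 1 and every z ∈ ℂ: ϕ_(n+1)(z) − (r_(n+1)/r_n) ϕ_n(z) = z · [ ϕ_n(z) − (r_(n+1)/r_n)(1 − r_n r̄_n) ϕ_(n−1)(z) ]. -/

import Mathlib

open Polynomial Matrix Filter

noncomputable section

/-- `(1/(2πi)) ∮_𝕋 f(ζ) dζ/ζ`, written as `(1/(2π)) ∫_0^{2π} f(e^{iθ}) dθ`. -/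
def circleAvg (f : ℂ → ℂ) : ℂ :=
  (2 * Real.pi : ℂ)⁻¹ * ∫ θ in (0:ℝ)..(2 * Real.pi), f (Complex.exp (θ * Complex.I))

/-- Fourier coefficient `w_k` of a weight `w` on the unit circle. -/
def fCoeff (w : ℂ → ℂ) (k : ℤ) : ℂ := circleAvg fun ζ => w ζ * ζ ^ (-k)

/-- Toeplitz determinant `I_n[w] = det (w_{j-k})_{j,k=0..n-1}`. -/
def toeplitzDet (w : ℂ → ℂ) (n : ℕ) : ℂ :=
  (Matrix.of fun j k : Fin n => fCoeff w ((j : ℤ) - (k : ℤ))).det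

/-- The Carathéodory function `F(z)`. -/
def cara (w : ℂ → ℂ) (z : ℂ) : ℂ := circleAvg fun ζ => (ζ + z) / (ζ - z) * w ζ

/-- A bi-orthogonal polynomial system (BOPS) on the unit circle for the weight `w`:
polynomials `φ_n`, `φ̄_n` of exact degree `n` with common leading coefficient `κ_n ≠ 0`,
bi-orthonormal with respect to `w`. -/
structure BOPS (w : ℂ → ℂ) where
  φ : ℕ → Polynomial ℂ
  φb : ℕ → Polynomial ℂ
  κ : ℕ → ℂ
  κ_ne : ∀ n, κ n ≠ 0
  degφ : ∀ n, (φ n).degree ≤ n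
  degφb : ∀ n, (φb n).degree ≤ n
  leadφ : ∀ n, (φ n).coeff n = κ n
  leadφb : ∀ n, (φb n).coeff n = κ n
  orth : ∀ m n, circleAvg (fun ζ => w ζ * (φ m).eval ζ * (φb n).eval ζ⁻¹)
      = if m = n then 1 else 0

namespace BOPS

variable {w : ℂ → ℂ}

/-- The reciprocal polynomial `φ*_n(z) = z^n φ̄_n(1/z)`. -/
def φs (S : BOPS w) (n : ℕ) : Polynomial ℂ := (S.φb n).reflect n

/-- `r_n = φ_n(0)/κ_n`. -/
def r (S : BOPS w) (n : ℕ) : ℂ := (S.φ n).eval 0 / S.κ n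

/-- `r̄_n = φ̄_n(0)/κ_n`. -/
def rb (S : BOPS w) (n : ℕ) : ℂ := (S.φb n).eval 0 / S.κ n

/-- Associated function `ξ_n`. -/
def ξ (S : BOPS w) : ℕ → ℂ → ℂ
  | 0, z => S.κ 0 * (fCoeff w 0 + cara w z)
  | n + 1, z => circleAvg fun ζ => (ζ + z) / (ζ - z) * w ζ * (S.φ (n + 1)).eval ζ

/-- Associated function `ξ*_n`. -/
def ξs (S : BOPS w) : ℕ → ℂ → ℂ
  | 0, z => S.κ 0 * (fCoeff w 0 - cara w z)
  | n + 1, z =>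
      -z ^ (n + 1) * circleAvg fun ζ => (ζ + z) / (ζ - z) * w ζ * (S.φb (n + 1)).eval ζ⁻¹

end BOPS

/-- A square matrix of size `K+1` built from a distinguished first row and `K` further rows. -/
def rowMat {K : ℕ} (top : Fin (K + 1) → ℂ) (rest : Fin K → Fin (K + 1) → ℂ) :
    Matrix (Fin (K + 1)) (Fin (K + 1)) ℂ :=
  Matrix.of fun i j => Fin.cases (top j) (fun r => rest r j) i

end

/-!
The monic polynomials `ϕ_n = φ_n / κ_n` and `ϕ̄_n = φ̄_n / κ_n` satisfy the Szegő recursions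
`ϕ_{n+1} = z ϕ_n + r_{n+1} ϕ*_n` and `ϕ̄_{n+1}(z) = z ϕ̄_n(z) + r̄_{n+1} z^n ϕ_n(1/z)`.
Reflecting the second one at degree `n + 1` gives `ϕ*_{n+1} = ϕ*_n + r̄_{n+1} z ϕ_n`, and
eliminating `ϕ*_{n+1}` and `ϕ*_n` between two consecutive instances of the first recursion yields
the three-term recurrence.

The recursions use only that the pairing `B(p, q) = ∮ w(ζ) p(ζ) q(1/ζ) dζ/(2πiζ)` is bilinear and
Toeplitz, `B(zp, zq) = B(p, q)`: the difference of the two sides of the first one has degree `≤ n`,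
vanishes at `0`, and is orthogonal to every `z ϕ̄_j` with `j < n`, hence it is zero. The second
recursion is the first one for the flipped pairing `(p, q) ↦ B(q, p)`.
-/

section Reflect

variable {R : Type*} [Semiring R]

theorem degree_reflect_lt {f : R[X]} {n : ℕ} (hf : f.natDegree ≤ n) (h0 : f.coeff 0 = 0) :
    (reflect n f).degree < n := by
  rw [degree_lt_iff_coeff_zero]
  intro m hm
  rw [coeff_reflect]
  rcases hm.eq_or_lt with rfl | hlt
  · simpa using h0
  · rw [revAt_eq_self_of_lt hlt]
    exact coeff_eq_zero_of_natDegree_lt (hf.trans_lt hlt)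

theorem reflect_succ_X_mul {p : R[X]} {n : ℕ} (hp : p.natDegree ≤ n) :
    reflect (n + 1) (X * p) = reflect n p := by
  rw [add_comm, reflect_mul _ _ natDegree_X_le hp, reflect_one_X, one_mul]

theorem reflect_succ_reflect {p : R[X]} {n : ℕ} (hp : p.natDegree ≤ n) :
    reflect (n + 1) (reflect n p) = X * p := by
  rw [← reflect_succ_X_mul hp, reflect_reflect]

end Reflect

theorem degree_sub_C_coeff_mul_lt {R : Type*} [Ring R] {p q : R[X]} {n : ℕ} (hp : p.degree ≤ n)
    (hq : q.Monic) (hqn : q.natDegree = n) : (p - C (p.coeff n) * q).degree < n := by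
  rw [degree_le_iff_coeff_zero] at hp
  rw [degree_lt_iff_coeff_zero]
  intro m hm
  rcases hm.eq_or_lt with rfl | hlt
  · simp [coeff_C_mul, ← hqn, hq.coeff_natDegree]
  · simp [coeff_C_mul, hp m (by exact_mod_cast hlt), coeff_eq_zero_of_natDegree_lt (hqn ▸ hlt)]

theorem monic_C_inv_mul {K : Type*} [Field K] {p : K[X]} {n : ℕ} (hp : p.degree ≤ n)
    (hn : p.coeff n ≠ 0) :
    (C (p.coeff n)⁻¹ * p).Monic ∧ (C (p.coeff n)⁻¹ * p).natDegree = n := by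
  have hdeg : p.natDegree = n :=
    natDegree_eq_of_degree_eq_some (degree_eq_of_le_of_coeff_ne_zero hp hn)
  refine ⟨monic_C_mul_of_mul_leadingCoeff_eq_one ?_, ?_⟩
  · rw [leadingCoeff, hdeg, inv_mul_cancel₀ hn]
  · rw [natDegree_C_mul (inv_ne_zero hn), hdeg]

def IsToeplitz {R : Type*} [CommSemiring R] (B : R[X] →ₗ[R] R[X] →ₗ[R] R) : Prop :=
  ∀ p q, B (X * p) (X * q) = B p q

namespace IsToeplitz

variable {R : Type*} [CommSemiring R] {B : R[X] →ₗ[R] R[X] →ₗ[R] R}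

theorem flip (hB : IsToeplitz B) : IsToeplitz B.flip := fun p q => hB q p

theorem X_pow_mul (hB : IsToeplitz B) (k : ℕ) (p q : R[X]) :
    B (X ^ k * p) (X ^ k * q) = B p q := by
  induction k with
  | zero => simp
  | succ k ih => rw [pow_succ', mul_assoc, mul_assoc, hB, ih]

theorem pairing_X_pow_X_pow_comm (hB : IsToeplitz B) {n i j : ℕ} (hi : i ≤ n) (hj : j ≤ n) :
    B (X ^ (n - i)) (X ^ j) = B (X ^ (n - j)) (X ^ i) := by
  have shift a b (ha : a ≤ n) : B (X ^ (n - a)) (X ^ b) = B (X ^ n) (X ^ (a + b)) := by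
    rw [← hB.X_pow_mul a, ← pow_add, ← pow_add, Nat.add_sub_cancel' ha]
  rw [shift i j hi, shift j i hj, add_comm]

theorem pairing_reflect_comm (hB : IsToeplitz B) {n : ℕ} {p q : R[X]}
    (hp : p.natDegree ≤ n) (hq : q.natDegree ≤ n) :
    B (reflect n p) q = B (reflect n q) p := by
  refine induction_with_natDegree_le (fun p => B (reflect n p) q = B (reflect n q) p) n
    (by simp) (fun i a _ hi => ?_) (fun f g _ _ hf hg => by simp_all [reflect_add]) p hp
  refine induction_with_natDegree_le
    (fun q => B (reflect n (C a * X ^ i)) q = B (reflect n q) (C a * X ^ i)) n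
    (by simp) (fun j b _ hj => ?_) (fun f g _ _ hf hg => by simp_all [reflect_add]) q hq
  rw [reflect_C_mul_X_pow, reflect_C_mul_X_pow, revAt_le hi, revAt_le hj]
  simp only [← smul_eq_C_mul, map_smul, LinearMap.smul_apply, hB.pairing_X_pow_X_pow_comm hi hj]
  exact smul_comm b a _

end IsToeplitz

structure MonicBiorthogonal {R : Type*} [CommRing R] (B : R[X] →ₗ[R] R[X] →ₗ[R] R)
    (P Q : ℕ → R[X]) : Prop where
  monic_left (n : ℕ) : (P n).Monic
  natDegree_left (n : ℕ) : (P n).natDegree = n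
  monic_right (n : ℕ) : (Q n).Monic
  natDegree_right (n : ℕ) : (Q n).natDegree = n
  pairing_eq_zero {m n : ℕ} : m ≠ n → B (P m) (Q n) = 0
  pairing_self_ne_zero (n : ℕ) : B (P n) (Q n) ≠ 0

namespace MonicBiorthogonal

variable {R : Type*} [CommRing R] {B : R[X] →ₗ[R] R[X] →ₗ[R] R} {P Q : ℕ → R[X]}

theorem flip (h : MonicBiorthogonal B P Q) : MonicBiorthogonal B.flip Q P where
  monic_left := h.monic_right
  natDegree_left := h.natDegree_right
  monic_right := h.monic_left
  natDegree_right := h.natDegree_left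
  pairing_eq_zero hmn := h.pairing_eq_zero (Ne.symm hmn)
  pairing_self_ne_zero := h.pairing_self_ne_zero

theorem coeff_self_left (h : MonicBiorthogonal B P Q) (n : ℕ) : (P n).coeff n = 1 := by
  simpa [h.natDegree_left n] using (h.monic_left n).coeff_natDegree

theorem coeff_self_right (h : MonicBiorthogonal B P Q) (n : ℕ) : (Q n).coeff n = 1 :=
  h.flip.coeff_self_left n

theorem natDegree_X_mul_right [Nontrivial R] (h : MonicBiorthogonal B P Q) (j : ℕ) :
    (X * Q j).natDegree = j + 1 := by
  rw [monic_X.natDegree_mul (h.monic_right j), natDegree_X, h.natDegree_right, add_comm]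

theorem pairing_eq_zero_of_degree_lt_left (h : MonicBiorthogonal B P Q) {p : R[X]} {n : ℕ}
    (hp : p.degree < n) : B p (Q n) = 0 := by
  suffices ∀ d ≤ n, ∀ p : R[X], p.degree < d → B p (Q n) = 0 from this n le_rfl p hp
  intro d
  induction d with
  | zero => simp_all
  | succ d ih =>
    intro hd p hp
    conv_lhs => rw [← sub_add_cancel p (C (p.coeff d) * P d)]
    rw [map_add, LinearMap.add_apply, ih (by omega) _
        (degree_sub_C_coeff_mul_lt (Order.lt_succ_iff.mp hp) (h.monic_left d) (h.natDegree_left d)),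
      ← smul_eq_C_mul, map_smul, LinearMap.smul_apply, h.pairing_eq_zero (by omega), smul_zero,
      zero_add]

theorem pairing_eq_zero_of_degree_lt_right (h : MonicBiorthogonal B P Q) {q : R[X]} {n : ℕ}
    (hq : q.degree < n) : B (P n) q = 0 :=
  h.flip.pairing_eq_zero_of_degree_lt_left hq

theorem pairing_eq_coeff_mul_left (h : MonicBiorthogonal B P Q) {p : R[X]} {n : ℕ}
    (hp : p.degree ≤ n) : B p (Q n) = p.coeff n * B (P n) (Q n) := by
  conv_lhs => rw [← sub_add_cancel p (C (p.coeff n) * P n)]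
  rw [map_add, LinearMap.add_apply, h.pairing_eq_zero_of_degree_lt_left
      (degree_sub_C_coeff_mul_lt hp (h.monic_left n) (h.natDegree_left n)),
    ← smul_eq_C_mul, map_smul, LinearMap.smul_apply, smul_eq_mul, zero_add]

theorem eq_zero_of_pairing_eq_zero [NoZeroDivisors R] (h : MonicBiorthogonal B P Q) {p : R[X]}
    {d : ℕ} (hp : p.degree < d) (horth : ∀ j < d, B p (Q j) = 0) : p = 0 := by
  induction d generalizing p with
  | zero => simp_all
  | succ d ih =>
    have hd : p.coeff d = 0 := by
      have := h.pairing_eq_coeff_mul_left (Order.lt_succ_iff.mp hp)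
      rw [horth d d.lt_succ_self] at this
      exact (mul_eq_zero.mp this.symm).resolve_right (h.pairing_self_ne_zero d)
    refine ih ?_ fun j hj => horth j (by omega)
    rw [degree_lt_iff_coeff_zero] at hp ⊢
    intro m hm
    rcases hm.eq_or_lt with rfl | hlt
    · exact hd
    · exact hp m hlt

theorem eq_zero_of_pairing_X_mul_eq_zero [NoZeroDivisors R] (hB : IsToeplitz B)
    (h : MonicBiorthogonal B P Q) {u : R[X]} {n : ℕ} (hu : u.degree ≤ n) (hu0 : u.coeff 0 = 0)
    (horth : ∀ j < n, B u (X * Q j) = 0) : u = 0 := by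
  have hX : u = X * u.divX := by simpa [hu0] using (X_mul_divX_add u).symm
  have hdeg : u.divX.degree < n := by
    rw [degree_le_iff_coeff_zero] at hu
    rw [degree_lt_iff_coeff_zero]
    intro m hm
    rw [coeff_divX]
    exact hu _ (by exact_mod_cast Nat.lt_succ_of_le hm)
  have hdivX : u.divX = 0 :=
    h.eq_zero_of_pairing_eq_zero hdeg fun j hj => by rw [← hB, ← hX, horth j hj]
  rw [hX, hdivX, mul_zero]

theorem szego_recurrence [IsDomain R] (hB : IsToeplitz B) (h : MonicBiorthogonal B P Q)
    (n : ℕ) : P (n + 1) = X * P n + C ((P (n + 1)).coeff 0) * reflect n (Q n) := by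
  have hψ : (reflect n (Q n)).natDegree ≤ n :=
    natDegree_reflect_le.trans (by rw [h.natDegree_right, max_self])
  rw [← sub_eq_zero, ← sub_sub]
  refine h.eq_zero_of_pairing_X_mul_eq_zero hB (n := n) ?_ ?_ fun j hj => ?_
  · rw [degree_le_iff_coeff_zero]
    intro m hm
    have hnm : n < m := by exact_mod_cast hm
    obtain ⟨k, rfl⟩ := Nat.exists_eq_add_one_of_ne_zero (by omega : m ≠ 0)
    have hk : n ≤ k := by omega
    rw [coeff_sub, coeff_sub, coeff_X_mul, coeff_C_mul,
      coeff_eq_zero_of_natDegree_lt (hψ.trans_lt (Nat.lt_succ_of_le hk)), mul_zero, sub_zero]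
    rcases hk.eq_or_lt with rfl | hlt
    · rw [h.coeff_self_left, h.coeff_self_left, sub_self]
    · rw [coeff_eq_zero_of_natDegree_lt (by rw [h.natDegree_left]; omega),
        coeff_eq_zero_of_natDegree_lt (by rw [h.natDegree_left]; omega), sub_self]
  · simp [coeff_reflect, h.coeff_self_right]
  · have hXQ := h.natDegree_X_mul_right j
    -- the reflected term pairs with `X * Q j` as `Q n` does with `reflect n (X * Q j)`,
    -- a polynomial of degree `< n`
    rw [map_sub, map_sub, LinearMap.sub_apply, LinearMap.sub_apply, hB,
      h.pairing_eq_zero_of_degree_lt_right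
        (degree_le_natDegree.trans_lt (by rw [hXQ]; exact_mod_cast Nat.succ_lt_succ hj)),
      h.pairing_eq_zero (by omega), ← smul_eq_C_mul, map_smul, LinearMap.smul_apply,
      hB.pairing_reflect_comm (by rw [h.natDegree_right]) (by omega),
      h.pairing_eq_zero_of_degree_lt_left (degree_reflect_lt (by omega) (by simp)), smul_zero,
      sub_zero, sub_self]

theorem szego_recurrence_right [IsDomain R] (hB : IsToeplitz B)
    (h : MonicBiorthogonal B P Q) (n : ℕ) :
    Q (n + 1) = X * Q n + C ((Q (n + 1)).coeff 0) * reflect n (P n) :=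
  h.flip.szego_recurrence hB.flip n

theorem reflect_succ_right [IsDomain R] (hB : IsToeplitz B) (h : MonicBiorthogonal B P Q)
    (n : ℕ) :
    reflect (n + 1) (Q (n + 1)) = reflect n (Q n) + C ((Q (n + 1)).coeff 0) * (X * P n) := by
  conv_lhs => rw [h.szego_recurrence_right hB n]
  rw [reflect_add, reflect_C_mul, reflect_succ_X_mul (h.natDegree_right n).le,
    reflect_succ_reflect (h.natDegree_left n).le]

theorem three_term_recurrence [IsDomain R] (hB : IsToeplitz B)
    (h : MonicBiorthogonal B P Q) (n : ℕ) :
    C ((P (n + 1)).coeff 0) * P (n + 2) - C ((P (n + 2)).coeff 0) * P (n + 1) =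
      X * (C ((P (n + 1)).coeff 0) * P (n + 1)
        - C ((P (n + 2)).coeff 0 * (1 - (P (n + 1)).coeff 0 * (Q (n + 1)).coeff 0)) * P n) := by
  set r₁ := (P (n + 1)).coeff 0
  set r₂ := (P (n + 2)).coeff 0
  have h₁ := h.szego_recurrence hB n
  have h₂ := h.szego_recurrence hB (n + 1)
  have hψ := h.reflect_succ_right hB n
  simp only [map_mul, map_sub, map_one]
  linear_combination C r₁ * h₂ - C r₂ * h₁ + C r₁ * C r₂ * hψ

end MonicBiorthogonal

theorem circleAvg_eq_circleAverage (f : ℂ → ℂ) : circleAvg f = Real.circleAverage f 0 1 := by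
  simp [circleAvg, Real.circleAverage, circleMap, Complex.real_smul]

theorem circleIntegrable_pairing {w : ℂ → ℂ} (hw : ContinuousOn w (Metric.sphere 0 1))
    (p q : ℂ[X]) : CircleIntegrable (fun ζ => w ζ * p.eval ζ * q.eval ζ⁻¹) 0 1 := by
  refine ContinuousOn.circleIntegrable zero_le_one ((hw.mul p.continuous.continuousOn).mul ?_)
  exact q.continuous.comp_continuousOn
    (continuousOn_inv₀.mono fun ζ hζ => ne_zero_of_mem_unit_sphere ⟨ζ, hζ⟩)

noncomputable def circlePairing {w : ℂ → ℂ} (hw : ContinuousOn w (Metric.sphere 0 1)) :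
    ℂ[X] →ₗ[ℂ] ℂ[X] →ₗ[ℂ] ℂ :=
  LinearMap.mk₂ ℂ (fun p q => circleAvg fun ζ => w ζ * p.eval ζ * q.eval ζ⁻¹)
    (fun p p' q => by
      simp only [circleAvg_eq_circleAverage]
      rw [← Real.circleAverage_fun_add (circleIntegrable_pairing hw p q)
        (circleIntegrable_pairing hw p' q)]
      congr 1 with ζ
      simp only [eval_add]
      ring)
    (fun a p q => by
      simp only [circleAvg_eq_circleAverage, eval_smul, smul_eq_mul, mul_left_comm _ a, mul_assoc]
      exact Real.circleAverage_fun_smul (𝕜 := ℂ))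
    (fun p q q' => by
      simp only [circleAvg_eq_circleAverage]
      rw [← Real.circleAverage_fun_add (circleIntegrable_pairing hw p q)
        (circleIntegrable_pairing hw p q')]
      congr 1 with ζ
      simp only [eval_add]
      ring)
    (fun a p q => by
      simp only [circleAvg_eq_circleAverage, eval_smul, smul_eq_mul, mul_left_comm _ a, mul_assoc]
      exact Real.circleAverage_fun_smul (𝕜 := ℂ))

@[simp]
theorem circlePairing_apply {w : ℂ → ℂ} (hw : ContinuousOn w (Metric.sphere 0 1)) (p q : ℂ[X]) :
    circlePairing hw p q = circleAvg fun ζ => w ζ * p.eval ζ * q.eval ζ⁻¹ :=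
  rfl

theorem isToeplitz_circlePairing {w : ℂ → ℂ} (hw : ContinuousOn w (Metric.sphere 0 1)) :
    IsToeplitz (circlePairing hw) := by
  intro p q
  simp only [circlePairing_apply, circleAvg_eq_circleAverage]
  refine Real.circleAverage_congr_sphere fun ζ hζ => ?_
  have : ζ ≠ 0 := ne_zero_of_mem_unit_sphere ⟨ζ, by simpa using hζ⟩
  simp only [eval_mul, eval_X]
  field_simp

namespace BOPS

variable {w : ℂ → ℂ}

noncomputable def monicφ (S : BOPS w) (n : ℕ) : ℂ[X] := C (S.κ n)⁻¹ * S.φ n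

noncomputable def monicφb (S : BOPS w) (n : ℕ) : ℂ[X] := C (S.κ n)⁻¹ * S.φb n

theorem monicBiorthogonal (S : BOPS w) (hw : ContinuousOn w (Metric.sphere 0 1)) :
    MonicBiorthogonal (circlePairing hw) S.monicφ S.monicφb := by
  have hφ n := monic_C_inv_mul (S.degφ n) ((S.leadφ n).symm ▸ S.κ_ne n)
  have hφb n := monic_C_inv_mul (S.degφb n) ((S.leadφb n).symm ▸ S.κ_ne n)
  simp only [S.leadφ, S.leadφb] at hφ hφb
  have hpair m n : circlePairing hw (S.monicφ m) (S.monicφb n)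
      = (S.κ m)⁻¹ * (S.κ n)⁻¹ * if m = n then 1 else 0 := by
    rw [monicφ, monicφb, ← smul_eq_C_mul, ← smul_eq_C_mul, map_smul, map_smul,
      LinearMap.smul_apply, circlePairing_apply, S.orth, smul_eq_mul, smul_eq_mul, mul_left_comm,
      mul_assoc]
  exact {
    monic_left n := (hφ n).1
    natDegree_left n := (hφ n).2
    monic_right n := (hφb n).1
    natDegree_right n := (hφb n).2
    pairing_eq_zero hmn := by rw [hpair, if_neg hmn, mul_zero]
    pairing_self_ne_zero n := by simp [hpair, S.κ_ne] }

end BOPS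

theorem monic_recurrence_general (w : ℂ → ℂ)
    (hw : ContinuousOn w (Metric.sphere (0 : ℂ) 1))
    (S : BOPS w)
    (hr : ∀ n, S.r n ≠ 0)
    (n : ℕ) (hn : 1 ≤ n) (z : ℂ) :
    (S.φ (n + 1)).eval z / S.κ (n + 1) - S.r (n + 1) / S.r n * ((S.φ n).eval z / S.κ n)
      = z * ((S.φ n).eval z / S.κ n
          - S.r (n + 1) / S.r n * (1 - S.r n * S.rb n)
              * ((S.φ (n - 1)).eval z / S.κ (n - 1))) := by
  obtain ⟨m, rfl⟩ := Nat.exists_eq_add_of_le' hn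
  have hrec := congrArg (eval z)
    ((S.monicBiorthogonal hw).three_term_recurrence (isToeplitz_circlePairing hw) m)
  have hr_eq k : (S.monicφ k).coeff 0 = S.r k := by
    simp [BOPS.monicφ, BOPS.r, coeff_zero_eq_eval_zero, div_eq_inv_mul]
  have hrb_eq k : (S.monicφb k).coeff 0 = S.rb k := by
    simp [BOPS.monicφb, BOPS.rb, coeff_zero_eq_eval_zero, div_eq_inv_mul]
  have heval k : (S.monicφ k).eval z = (S.φ k).eval z / S.κ k := by
    simp [BOPS.monicφ, div_eq_inv_mul]
  simp only [eval_sub, eval_mul, eval_C, eval_X, hr_eq, hrb_eq, heval] at hrec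
  rw [Nat.add_sub_cancel]
  field_simp [hr (m + 1)]
  linear_combination hrec

/-- second-order recurrence for the monic bi-orthogonal polynomials. -/
theorem monic_recurrence (w : ℂ → ℂ)
    (hw : ContinuousOn w (Metric.sphere (0 : ℂ) 1))
    (hI : ∀ n, toeplitzDet w n ≠ 0) (S : BOPS w)
    (hr : ∀ n, S.r n ≠ 0)
    (n : ℕ) (hn : 1 ≤ n) (z : ℂ) :
    (S.φ (n + 1)).eval z / S.κ (n + 1) - S.r (n + 1) / S.r n * ((S.φ n).eval z / S.κ n)
      = z * ((S.φ n).eval z / S.κ n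
          - S.r (n + 1) / S.r n * (1 - S.r n * S.rb n)
              * ((S.φ (n - 1)).eval z / S.κ (n - 1))) :=
  monic_recurrence_general w hw S hr n hn z
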